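/- Let L̃ be a real-valued differentiable function on ℝ^{n_{L+1}×n₀}, and define L(W₀,…,W_L) = L̃(W_L⋯W₀) for W_k ∈ ℝ^{n_{k+1}×n_k}. Assume min_{0 ≤ k ≤ L+1} n_k = min{n₀, n_{L+1}}. Then any local minimizer (Ŵ₀,…,Ŵ_L) of L satisfies ∇L̃(Â) = 0, where Â = Ŵ_L⋯Ŵ₀. -/

import Mathlib

/-!
Write `φ` for the derivative of `L̃` at `Â`, a linear functional on matrices, and induct on the
number of layers, removing the layer at the wider end of the network. Say `n₀ ≤ n_{L+1}` and let
`B = W_{L-1} ⋯ W₀`. The lower layers form a local minimum of `M ↦ L̃(W_L M)`, so by induction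
`φ(W_L Z) = 0` for all `Z`, and this holds at every local minimum with product `Â`. Stationarity in
`W_L` gives `φ(V B) = 0` for all `V`. If `V ↦ V B` is not onto then, as `n₀ ≤ n_L`, some `v ≠ 0`
has `vᵀ B = 0`. Moving `W_L` along a `Y` with `Y B = 0` keeps the product, and a point close to a
local minimum with the same value is again one, so `φ((W_L + t Y) Z) = 0` for small `t`, whence
`φ(Y Z) = 0`. Such products `Y Z` (take `Y = e vᵀ`) span all matrices. If `n_{L+1} ≤ n₀`, the bottom
layer is removed instead, symmetrically.
-/

noncomputable def matProd (d : ℕ → ℕ)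
    (W : (k : ℕ) → Fin (d (k + 1)) → Fin (d k) → ℝ) :
    (k : ℕ) → Matrix (Fin (d (k + 1))) (Fin (d 0)) ℝ
  | 0 => Matrix.of (W 0)
  | (k + 1) => Matrix.of (W (k + 1)) * matProd d W k

open Filter Topology Matrix Function

section LinearAlgebra

variable {K : Type*} [Field K] {m n q : Type*} [Fintype m] [Fintype n] [Fintype q]

theorem Matrix.exists_mul_eq_one_or_exists_vecMul_eq_zero [DecidableEq n] (B : Matrix q n K)
    (h : Fintype.card n ≤ Fintype.card q) :
    (∃ C : Matrix n q K, C * B = 1) ∨ ∃ v ≠ 0, v ᵥ* B = 0 := by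
  by_cases hinj : Function.Injective B.vecMulLinear
  · left
    rw [← vecMul_surjective_iff_exists_left_inverse]
    refine (LinearMap.injective_iff_surjective_of_finrank_eq_finrank ?_).1 hinj
    have := LinearMap.finrank_le_finrank_of_injective hinj
    simp only [Module.finrank_fintype_fun_eq_card] at this ⊢
    omega
  · right
    simpa [injective_iff_map_eq_zero, and_comm] using hinj

variable {M : Type*} [AddCommGroup M] [Module K M]

theorem Matrix.linearMap_eq_zero_of_mul_right (φ : Matrix m n K →ₗ[K] M) (B : Matrix q n K)
    (h : Fintype.card n ≤ Fintype.card q) (hB : ∀ V : Matrix m q K, φ (V * B) = 0)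
    (hker : ∀ Y : Matrix m q K, Y * B = 0 → ∀ Z : Matrix q n K, φ (Y * Z) = 0) : φ = 0 := by
  classical
  rcases B.exists_mul_eq_one_or_exists_vecMul_eq_zero h with ⟨C, hC⟩ | ⟨v, hv, hvB⟩
  · ext M
    simpa [Matrix.mul_assoc, hC] using hB (M * C)
  · obtain ⟨k, hk⟩ : ∃ k, v k ≠ 0 := Function.ne_iff.mp hv
    refine Matrix.ext_linearMap K fun i j => LinearMap.ext fun c => ?_
    have hsingle : single i j c
        = vecMulVec (Pi.single i 1) v * vecMulVec (Pi.single k (v k)⁻¹) (Pi.single j c) := by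
      rw [vecMulVec_mul_vecMulVec]
      ext a b
      simp only [dotProduct_single, mul_inv_cancel₀ hk, one_smul, vecMulVec_apply, single_apply,
        Pi.single_apply]
      grind
    simpa [hsingle] using hker _ (by ext; simp [vecMulVec_mul, hvB, vecMulVec_apply]) _


theorem Matrix.linearMap_eq_zero_of_mul_left (φ : Matrix m n K →ₗ[K] M)
    (T : Matrix m q K) (h : Fintype.card m ≤ Fintype.card q)
    (hT : ∀ V : Matrix q n K, φ (T * V) = 0)
    (hker : ∀ Y : Matrix q n K, T * Y = 0 → ∀ Z : Matrix m q K, φ (Z * Y) = 0) : φ = 0 := by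
  have hφt := linearMap_eq_zero_of_mul_right (φ.comp (transposeLinearEquiv n m K K).toLinearMap)
    Tᵀ h (fun V => by simpa [transpose_mul] using hT Vᵀ) fun Y hY Z => by
      simpa [transpose_mul] using hker Yᵀ (by rw [← transpose_transpose (T * Yᵀ), transpose_mul,
        transpose_transpose, hY, transpose_zero]) Zᵀ
  ext M
  simpa using LinearMap.congr_fun hφt Mᵀ

end LinearAlgebra

section Calculus

theorem IsLocalMin.eventually_isLocalMin {X β : Type*} [TopologicalSpace X] [Preorder β]
    {f : X → β} {a : X} (h : IsLocalMin f a) : ∀ᶠ y in 𝓝 a, f y = f a → IsLocalMin f y := by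
  filter_upwards [eventually_eventually_nhds.2 h] with y hy hya
  exact hy.mono fun z hz => hya ▸ hz

theorem IsLocalMin.comp_continuous_of_eq {X Y β : Type*} [TopologicalSpace X]
    [TopologicalSpace Y] [Preorder β] {f : Y → β} {a : Y} {g : X → Y} {b : X}
    (hf : IsLocalMin f a) (hg : ContinuousAt g b) (hb : g b = a) : IsLocalMin (f ∘ g) b := by
  subst hb
  exact hf.comp_continuous hg

theorem LinearMap.map_eq_zero_of_eventually_map_add_smul_eq_zero {𝕜 E F : Type*}
    [NontriviallyNormedField 𝕜] [AddCommGroup E] [Module 𝕜 E] [AddCommGroup F] [Module 𝕜 F]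
    [NoZeroSMulDivisors 𝕜 F] (ψ : E →ₗ[𝕜] F) {x y : E}
    (h : ∀ᶠ t in 𝓝 (0 : 𝕜), ψ (x + t • y) = 0) : ψ y = 0 := by
  have hx : ψ x = 0 := by simpa using h.self_of_nhds
  obtain ⟨t, ht, ht0⟩ := ((h.filter_mono nhdsWithin_le_nhds).and self_mem_nhdsWithin).exists
    (f := 𝓝[≠] (0 : 𝕜))
  rw [map_add, map_smul, hx, zero_add] at ht
  exact (smul_eq_zero.1 ht).resolve_left ht0

section CompCLM

variable {E F : Type*} [NormedAddCommGroup E] [NormedSpace ℝ E] [NormedAddCommGroup F]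
  [NormedSpace ℝ F] {g : F → ℝ} {ℓ : E →L[ℝ] F} {x : E}

theorem DifferentiableAt.comp_clm (hg : DifferentiableAt ℝ g (ℓ x)) :
    DifferentiableAt ℝ (fun y => g (ℓ y)) x :=
  hg.comp x ℓ.differentiableAt

theorem fderiv_apply_eq_zero_of_fderiv_comp_eq_zero (hg : DifferentiableAt ℝ g (ℓ x))
    (h : fderiv ℝ (fun y => g (ℓ y)) x = 0) (v : E) : fderiv ℝ g (ℓ x) (ℓ v) = 0 := by
  rw [show (fun y => g (ℓ y)) = g ∘ ℓ from rfl, fderiv_comp x hg ℓ.differentiableAt, ℓ.fderiv]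
    at h
  exact congr($h v)

end CompCLM

variable {l m n : Type*}

noncomputable def Matrix.mulLeftCLM [Fintype m] [Fintype n] (X : Matrix l m ℝ) :
    (m → n → ℝ) →L[ℝ] (l → n → ℝ) :=
  LinearMap.toContinuousLinearMap (mulLeftLinearMap n ℝ X)

noncomputable def Matrix.mulRightCLM [Fintype l] [Fintype m] (Y : Matrix m n ℝ) :
    (l → m → ℝ) →L[ℝ] (l → n → ℝ) :=
  LinearMap.toContinuousLinearMap (mulRightLinearMap l ℝ Y)

end Calculus

namespace LinearNet

abbrev Weights (d : ℕ → ℕ) : Type := (k : ℕ) → Fin (d (k + 1)) → Fin (d k) → ℝ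

variable {d : ℕ → ℕ}

theorem matProd_update_of_lt (W : Weights d) {n k : ℕ} (h : n < k)
    (X : Fin (d (k + 1)) → Fin (d k) → ℝ) :
    matProd d (update W k X) n = matProd d W n := by
  induction n with
  | zero => rw [matProd, matProd, update_of_ne h.ne]
  | succ n ih => rw [matProd, matProd, update_of_ne h.ne, ih (by omega)]

theorem matProd_update_succ (W : Weights d) (n : ℕ)
    (X : Fin (d (n + 1 + 1)) → Fin (d (n + 1)) → ℝ) :
    matProd d (update W (n + 1) X) (n + 1) = of X * matProd d W n := by
  rw [matProd, update_self, matProd_update_of_lt W n.lt_succ_self]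

def consLayer (X : Fin (d 1) → Fin (d 0) → ℝ) (V : Weights (fun k => d (k + 1))) : Weights d
  | 0 => X
  | k + 1 => V k

theorem consLayer_head_tail (W : Weights d) : consLayer (W 0) (fun k => W (k + 1)) = W := by
  funext k
  cases k <;> rfl

theorem matProd_consLayer (X : Fin (d 1) → Fin (d 0) → ℝ) (V : Weights (fun k => d (k + 1)))
    (n : ℕ) : matProd d (consLayer X V) (n + 1) = matProd (fun k => d (k + 1)) V n * of X := by
  induction n with
  | zero => rfl
  | succ n ih => rw [matProd, ih, ← Matrix.mul_assoc]; rfl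

theorem continuous_consLayer_left (V : Weights (fun k => d (k + 1))) :
    Continuous fun X => consLayer X V :=
  continuous_pi fun k => by cases k; exacts [continuous_id, continuous_const]

theorem continuous_consLayer_right (X : Fin (d 1) → Fin (d 0) → ℝ) :
    Continuous (consLayer (d := d) X) :=
  continuous_pi fun k => by cases k; exacts [continuous_const, continuous_apply _]

theorem eventually_forall_abs_sub_lt (W : Weights d) (L : ℕ) {ε : ℝ} (hε : 0 < ε) :
    ∀ᶠ W' in 𝓝 W, ∀ k ≤ L, ∀ i j, |W' k i j - W k i j| < ε := by
  have hnear : ∀ k i j, ∀ᶠ W' in 𝓝 W, |W' k i j - W k i j| < ε := fun k i j =>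
    (by fun_prop : Continuous fun W' : Weights d => |W' k i j - W k i j|).continuousAt.eventually_lt
      continuousAt_const (by simpa using hε)
  filter_upwards [(eventually_all_finite (Set.finite_Iic L)).2 fun k _ =>
    eventually_all.2 fun i => eventually_all.2 (hnear k i)] with W' h k hk using h k hk

def LocalMinCritical (d : ℕ → ℕ) (L : ℕ) : Prop :=
  ∀ (Lt : (Fin (d (L + 1)) → Fin (d 0) → ℝ) → ℝ) (W : Weights d),
    IsLocalMin (fun V => Lt (matProd d V L)) W → DifferentiableAt ℝ Lt (matProd d W L) →
    fderiv ℝ Lt (matProd d W L) = 0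

theorem localMinCritical_zero : LocalMinCritical d 0 := by
  intro Lt W hmin _
  exact (hmin.comp_continuous_of_eq (continuous_const.update 0 continuous_id).continuousAt
    (update_eq_self 0 W)).fderiv_eq_zero

variable {L : ℕ}

theorem LocalMinCritical.fderiv_top_mul_eq_zero (ih : LocalMinCritical d L)
    {Lt : (Fin (d (L + 1 + 1)) → Fin (d 0) → ℝ) → ℝ} {W : Weights d}
    (hmin : IsLocalMin (fun V => Lt (matProd d V (L + 1))) W)
    (hdiff : DifferentiableAt ℝ Lt (matProd d W (L + 1)))
    (Z : Matrix (Fin (d (L + 1))) (Fin (d 0)) ℝ) :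
    fderiv ℝ Lt (matProd d W (L + 1)) (of (W (L + 1)) * Z) = 0 := by
  have hloc := hmin.comp_continuous_of_eq
    (continuous_id.update (L + 1) continuous_const).continuousAt (update_eq_self (L + 1) W)
  simp only [comp_def, id, matProd_update_succ] at hloc
  exact fderiv_apply_eq_zero_of_fderiv_comp_eq_zero (ℓ := mulLeftCLM (of (W (L + 1)))) hdiff
    (ih _ W hloc hdiff.comp_clm) Z

theorem LocalMinCritical.fderiv_mul_bottom_eq_zero (ih : LocalMinCritical (fun k => d (k + 1)) L)
    {Lt : (Fin (d (L + 1 + 1)) → Fin (d 0) → ℝ) → ℝ} {X : Fin (d 1) → Fin (d 0) → ℝ}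
    {V : Weights (fun k => d (k + 1))}
    (hmin : IsLocalMin (fun V => Lt (matProd d V (L + 1))) (consLayer X V))
    (hdiff : DifferentiableAt ℝ Lt (matProd d (consLayer X V) (L + 1)))
    (Z : Matrix (Fin (d (L + 1 + 1))) (Fin (d 1)) ℝ) :
    fderiv ℝ Lt (matProd d (consLayer X V) (L + 1)) (Z * of X) = 0 := by
  have hloc := hmin.comp_continuous_of_eq (continuous_consLayer_right X).continuousAt rfl
  simp only [comp_def, matProd_consLayer] at hloc
  rw [matProd_consLayer] at hdiff ⊢
  exact fderiv_apply_eq_zero_of_fderiv_comp_eq_zero (ℓ := mulRightCLM (of X)) hdiff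
    (ih _ V hloc hdiff.comp_clm) Z

theorem LocalMinCritical.succ_of_le (ih : LocalMinCritical d L) (hdim : d 0 ≤ d (L + 1)) :
    LocalMinCritical d (L + 1) := by
  intro Lt W hmin hdiff
  set A := matProd d W (L + 1)
  set B := matProd d W L
  refine ContinuousLinearMap.coe_injective (linearMap_eq_zero_of_mul_right
    (fderiv ℝ Lt A).toLinearMap B (by simpa using hdim) (fun V => ?_) fun Y hY Z => ?_)
  · have hloc := hmin.comp_continuous_of_eq
      (continuous_const.update (L + 1) continuous_id).continuousAt (update_eq_self (L + 1) W)
    simp only [comp_def, id, matProd_update_succ] at hloc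
    exact fderiv_apply_eq_zero_of_fderiv_comp_eq_zero (ℓ := mulRightCLM B) (x := W (L + 1)) hdiff
      hloc.fderiv_eq_zero V
  · obtain ⟨Y, rfl⟩ := of.surjective Y
    have hprod : ∀ t : ℝ, matProd d (update W (L + 1) (W (L + 1) + t • Y)) (L + 1) = A := by
      intro t
      rw [matProd_update_succ]
      show (of (W (L + 1)) + t • of Y) * B = A
      rw [Matrix.add_mul, Matrix.smul_mul, hY, smul_zero, add_zero]
      rfl
    have hcurve : ∀ᶠ t in 𝓝 (0 : ℝ),
        IsLocalMin (fun V => Lt (matProd d V (L + 1))) (update W (L + 1) (W (L + 1) + t • Y)) := by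
      have hc : Continuous fun t : ℝ => update W (L + 1) (W (L + 1) + t • Y) :=
        continuous_const.update _ (by fun_prop)
      filter_upwards [(hc.tendsto' 0 W (by simp)).eventually hmin.eventually_isLocalMin]
        with t ht using ht (congrArg Lt (hprod t))
    refine LinearMap.map_eq_zero_of_eventually_map_add_smul_eq_zero
      ((fderiv ℝ Lt A).toLinearMap ∘ₗ mulRightLinearMap _ ℝ Z) (x := of (W (L + 1))) ?_
    filter_upwards [hcurve] with t ht
    have h := ih.fderiv_top_mul_eq_zero ht ((hprod t).symm ▸ hdiff) Z
    rwa [hprod t, update_self] at h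

theorem LocalMinCritical.succ_of_shift (ih : LocalMinCritical (fun k => d (k + 1)) L)
    (hdim : d (L + 1 + 1) ≤ d 1) : LocalMinCritical d (L + 1) := by
  intro Lt W hmin hdiff
  set T := matProd (fun k => d (k + 1)) (fun k => W (k + 1)) L
  have hA : matProd d W (L + 1) = T * of (W 0) := by
    rw [← matProd_consLayer, consLayer_head_tail]
  rw [hA] at hdiff ⊢
  refine ContinuousLinearMap.coe_injective (linearMap_eq_zero_of_mul_left
    (fderiv ℝ Lt (T * of (W 0))).toLinearMap T (by simpa using hdim) (fun V => ?_)
    fun Y hY Z => ?_)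
  · have hloc := hmin.comp_continuous_of_eq
      (continuous_consLayer_left (fun k => W (k + 1))).continuousAt (consLayer_head_tail W)
    simp only [comp_def, matProd_consLayer] at hloc
    exact fderiv_apply_eq_zero_of_fderiv_comp_eq_zero (ℓ := mulLeftCLM T) (x := W 0) hdiff
      hloc.fderiv_eq_zero V
  · obtain ⟨Y, rfl⟩ := of.surjective Y
    have hprod : ∀ t : ℝ,
        matProd d (consLayer (W 0 + t • Y) (fun k => W (k + 1))) (L + 1) = T * of (W 0) := by
      intro t
      rw [matProd_consLayer]
      show T * (of (W 0) + t • of Y) = _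
      rw [Matrix.mul_add, Matrix.mul_smul, hY, smul_zero, add_zero]
    have hcurve : ∀ᶠ t in 𝓝 (0 : ℝ), IsLocalMin (fun V => Lt (matProd d V (L + 1)))
        (consLayer (W 0 + t • Y) (fun k => W (k + 1))) := by
      have hc : Continuous fun t : ℝ => consLayer (W 0 + t • Y) (fun k => W (k + 1)) :=
        (continuous_consLayer_left _).comp (by fun_prop)
      filter_upwards [(hc.tendsto' 0 W (by simp [consLayer_head_tail])).eventually
        hmin.eventually_isLocalMin] with t ht using ht (congrArg Lt ((hprod t).trans hA.symm))
    refine LinearMap.map_eq_zero_of_eventually_map_add_smul_eq_zero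
      ((fderiv ℝ Lt (T * of (W 0))).toLinearMap ∘ₗ mulLeftLinearMap _ ℝ Z) (x := of (W 0)) ?_
    filter_upwards [hcurve] with t ht
    have h := ih.fderiv_mul_bottom_eq_zero ht ((hprod t).symm ▸ hdiff) Z
    rwa [hprod t] at h

theorem localMinCritical_of_min_le : ∀ {L : ℕ} {d : ℕ → ℕ},
    (∀ k ≤ L + 1, min (d 0) (d (L + 1)) ≤ d k) → LocalMinCritical d L
  | 0, _, _ => localMinCritical_zero
  | L + 1, d, hbot => by
    rcases le_total (d 0) (d (L + 1 + 1)) with hin | hout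
    · have hd : ∀ k ≤ L + 1 + 1, d 0 ≤ d k := by simpa [min_eq_left hin] using hbot
      refine LocalMinCritical.succ_of_le ?_ (hd (L + 1) (by omega))
      exact localMinCritical_of_min_le fun k hk => (min_le_left _ _).trans (hd k (by omega))
    · have hd : ∀ k ≤ L + 1 + 1, d (L + 1 + 1) ≤ d k := by simpa [min_eq_right hout] using hbot
      refine LocalMinCritical.succ_of_shift ?_ (hd 1 (by omega))
      exact localMinCritical_of_min_le fun k hk => (min_le_right _ _).trans (hd (k + 1) (by omega))

end LinearNet

/-- Theorem: let `L̃` be differentiable on `ℝ^{n_{L+1}×n₀}` and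
`L(W₀,…,W_L) = L̃(W_L ⋯ W₀)`, with no bottleneck (`min_k n_k = min{n₀, n_{L+1}}`).
Then any local minimizer `Ŵ` of `L` satisfies `∇L̃(Â) = 0` for `Â = Ŵ_L ⋯ Ŵ₀`. -/
theorem linear_net_local_minima_are_critical
    (d : ℕ → ℕ) (L : ℕ)
    (hbot : ∀ k, k ≤ L + 1 → min (d 0) (d (L + 1)) ≤ d k)
    (Lt : (Fin (d (L + 1)) → Fin (d 0) → ℝ) → ℝ)
    (hdiff : Differentiable ℝ Lt)
    (W : (k : ℕ) → Fin (d (k + 1)) → Fin (d k) → ℝ)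
    (hlocmin : ∃ ε > (0 : ℝ), ∀ W' : (k : ℕ) → Fin (d (k + 1)) → Fin (d k) → ℝ,
      (∀ k, k ≤ L → ∀ i j, |W' k i j - W k i j| < ε) →
      Lt (fun i j => matProd d W L i j) ≤ Lt (fun i j => matProd d W' L i j)) :
    fderiv ℝ Lt (fun i j => matProd d W L i j) = 0 := by
  obtain ⟨ε, hε, hmin⟩ := hlocmin
  have hloc : IsLocalMin (fun V => Lt (matProd d V L)) W :=
    (LinearNet.eventually_forall_abs_sub_lt W L hε).mono hmin
  exact LinearNet.localMinCritical_of_min_le hbot Lt W hloc (hdiff _)
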